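/- arXiv:1205.0828 — 4 statements merged into one kernel-verified Lean document; each statement's English description precedes it below -/
import Mathlib

section
/- Let $M=\{M_i\}_{i=1}^k$ and $N=\{N_i\}_{i=1}^k$ be measurements on a $D$-dimensional space with outcome distributions $p(M_i)=\frac{1}{D}\|M_i\|_F^2$, $p(N_i)=\frac{1}{D}\|N_i\|_F^2$. Then $\Delta(M,N) \ge \frac{1}{\sqrt{2}} D(\mathbf{p}(M),\mathbf{p}(N))$, where $D(\mathbf{p},\mathbf{q})=\tfrac{1}{2}\sum_i|p_i-q_i|$ is the variational distance. -/
open Matrix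

/-- The phase-invariant normalized Frobenius distance between two square complex
matrices, `Δ(A,B) = inf_{θ ∈ [0,2π)} (1/√(2D)) ‖A - e^{iθ} B‖_F`, where `D` is the
dimension of the underlying space. -/
noncomputable def Delta {n : Type*} [Fintype n] (A B : Matrix n n ℂ) : ℝ :=
  sInf {x : ℝ | ∃ θ ∈ Set.Ico (0 : ℝ) (2 * Real.pi),
    x = (1 / Real.sqrt (2 * Fintype.card n)) *
      Real.sqrt (((A - Complex.exp (θ * Complex.I) • B)ᴴ *
        (A - Complex.exp (θ * Complex.I) • B)).trace.re)}

/-!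
Write `a i = ‖M i‖_F` and `b i = ‖N i‖_F`, so that `p(M_i) = a i ² / D` and
`∑ a i ² = ∑ b i ² = D`. Since a phase does not change the Frobenius norm, the reverse triangle
inequality gives `Δ(M_i, N_i)² ≥ (a i - b i)² / 2D`. On the other side, factoring
`a² - b² = (a - b)(a + b)` and applying Cauchy–Schwarz,
`(∑ |a i ² - b i ²|)² ≤ ∑ (a i - b i)² · ∑ (a i + b i)² ≤ 4D ∑ (a i - b i)²`.
-/

attribute [local instance] Matrix.frobeniusNormedAddCommGroup Matrix.frobeniusNormedSpace

theorem sq_sum_abs_sq_sub_sq_le {ι : Type*} (s : Finset ι) (a b : ι → ℝ) :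
    (∑ i ∈ s, |a i ^ 2 - b i ^ 2|) ^ 2 ≤
      (∑ i ∈ s, (a i - b i) ^ 2) * (2 * ∑ i ∈ s, a i ^ 2 + 2 * ∑ i ∈ s, b i ^ 2) := by
  have hfactor : ∀ i, |a i ^ 2 - b i ^ 2| = |a i - b i| * |a i + b i| := fun i => by
    rw [← abs_mul]; congr 1; ring
  have hsum_add_sq :
      ∑ i ∈ s, (a i + b i) ^ 2 ≤ 2 * ∑ i ∈ s, a i ^ 2 + 2 * ∑ i ∈ s, b i ^ 2 := by
    rw [Finset.mul_sum, Finset.mul_sum, ← Finset.sum_add_distrib]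
    exact Finset.sum_le_sum fun i _ => by nlinarith [sq_nonneg (a i - b i)]
  calc (∑ i ∈ s, |a i ^ 2 - b i ^ 2|) ^ 2
      ≤ (∑ i ∈ s, |a i - b i| ^ 2) * ∑ i ∈ s, |a i + b i| ^ 2 := by
        simp only [hfactor]; exact Finset.sum_mul_sq_le_sq_mul_sq s _ _
    _ ≤ _ := by simp only [sq_abs]; gcongr

theorem Matrix.re_trace_conjTranspose_mul_self {m n : Type*} [Fintype m] [Fintype n]
    (A : Matrix m n ℂ) : (Aᴴ * A).trace.re = ‖A‖ ^ 2 := by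
  simp only [frobenius_norm_def, Real.rpow_two, ← Real.sqrt_eq_rpow]
  rw [Real.sq_sqrt (by positivity)]
  simp only [trace, diag, mul_apply, conjTranspose_apply, Complex.re_sum]
  rw [Finset.sum_comm]
  refine Finset.sum_congr rfl fun i _ => Finset.sum_congr rfl fun j _ => ?_
  simp [Complex.sq_norm, Complex.normSq_apply]

theorem sum_sq_norm_eq_card_of_sum_conjTranspose_mul_self_eq_one {ι m n : Type*} [Fintype ι]
    [Fintype m] [Fintype n] [DecidableEq n] (A : ι → Matrix m n ℂ)
    (h : ∑ i, (A i)ᴴ * A i = 1) :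
    ∑ i, ‖A i‖ ^ 2 = Fintype.card n := by
  simpa [trace_sum, Complex.re_sum, re_trace_conjTranspose_mul_self] using
    congrArg (fun X => X.trace.re) h

theorem abs_norm_sub_norm_div_le_Delta {n : Type*} [Fintype n] (A B : Matrix n n ℂ) :
    |‖A‖ - ‖B‖| / Real.sqrt (2 * Fintype.card n) ≤ Delta A B := by
  rw [← one_div_mul_eq_div]
  refine le_csInf ⟨_, 0, ⟨le_rfl, by positivity⟩, rfl⟩ ?_
  rintro x ⟨θ, -, rfl⟩
  rw [re_trace_conjTranspose_mul_self, Real.sqrt_sq (norm_nonneg _)]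
  gcongr
  calc |‖A‖ - ‖B‖| = |‖A‖ - ‖Complex.exp (θ * Complex.I) • B‖| := by
        rw [norm_smul, Complex.norm_exp_ofReal_mul_I, one_mul]
    _ ≤ ‖A - Complex.exp (θ * Complex.I) • B‖ := abs_norm_sub_norm_le _ _

theorem sq_norm_sub_norm_div_le_Delta_sq {n : Type*} [Fintype n] (A B : Matrix n n ℂ) :
    (‖A‖ - ‖B‖) ^ 2 / (2 * Fintype.card n) ≤ Delta A B ^ 2 := by
  calc (‖A‖ - ‖B‖) ^ 2 / (2 * Fintype.card n)
      = (|‖A‖ - ‖B‖| / Real.sqrt (2 * Fintype.card n)) ^ 2 := by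
        rw [div_pow, sq_abs, Real.sq_sqrt (by positivity)]
    _ ≤ Delta A B ^ 2 := by gcongr; exact abs_norm_sub_norm_div_le_Delta A B

theorem stmt_8_general (D k : ℕ)
    (M N : Fin k → Matrix (Fin D) (Fin D) ℂ)
    (hM : ∑ i, (M i)ᴴ * M i = 1) (hN : ∑ i, (N i)ᴴ * N i = 1) :
    (1 / Real.sqrt 2) * ((1 / 2) * ∑ i,
        |(1 / D) * ((M i)ᴴ * M i).trace.re - (1 / D) * ((N i)ᴴ * N i).trace.re|) ≤
      Real.sqrt (∑ i, (Delta (M i) (N i)) ^ 2) := by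
  simp only [re_trace_conjTranspose_mul_self, ← mul_sub, abs_mul, ← Finset.mul_sum]
  set a : Fin k → ℝ := fun i => ‖M i‖
  set b : Fin k → ℝ := fun i => ‖N i‖
  have hMnorm : ∑ i, a i ^ 2 = D := by
    simpa using sum_sq_norm_eq_card_of_sum_conjTranspose_mul_self_eq_one M hM
  have hNnorm : ∑ i, b i ^ 2 = D := by
    simpa using sum_sq_norm_eq_card_of_sum_conjTranspose_mul_self_eq_one N hN
  have hDelta : ∀ i, (a i - b i) ^ 2 / (2 * D) ≤ Delta (M i) (N i) ^ 2 := fun i => by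
    simpa using sq_norm_sub_norm_div_le_Delta_sq (M i) (N i)
  rw [Real.le_sqrt (by positivity) (by positivity)]
  calc _ = (∑ i, |a i ^ 2 - b i ^ 2|) ^ 2 * ((D : ℝ)⁻¹ * (D : ℝ)⁻¹ / 8) := by
        rw [abs_of_nonneg (by positivity), mul_pow, one_div, inv_pow, Real.sq_sqrt zero_le_two]
        ring
    _ ≤ (∑ i, (a i - b i) ^ 2) * (2 * D + 2 * D) * ((D : ℝ)⁻¹ * (D : ℝ)⁻¹ / 8) := by
        gcongr
        simpa [hMnorm, hNnorm] using sq_sum_abs_sq_sub_sq_le Finset.univ a b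
    _ = (∑ i, (a i - b i) ^ 2) / (2 * D) := by
        -- also true for `D = 0`, where `0⁻¹ = 0`
        have hinv : (D : ℝ)⁻¹ * D * (D : ℝ)⁻¹ = (D : ℝ)⁻¹ := by
          simpa using mul_inv_mul_cancel ((D : ℝ)⁻¹)
        rw [mul_assoc, show (2 * D + 2 * D) * ((D : ℝ)⁻¹ * (D : ℝ)⁻¹ / 8)
          = ((D : ℝ)⁻¹ * D * (D : ℝ)⁻¹) / 2 by ring, hinv]
        ring
    _ ≤ ∑ i, Delta (M i) (N i) ^ 2 := by
        rw [Finset.sum_div]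
        exact Finset.sum_le_sum fun i _ => hDelta i

theorem stmt_8 (D k : ℕ) (hD : 0 < D)
    (M N : Fin k → Matrix (Fin D) (Fin D) ℂ)
    (hM : ∑ i, (M i)ᴴ * M i = 1) (hN : ∑ i, (N i)ᴴ * N i = 1) :
    (1 / Real.sqrt 2) * ((1 / 2) * ∑ i,
        |(1 / D) * ((M i)ᴴ * M i).trace.re - (1 / D) * ((N i)ᴴ * N i).trace.re|) ≤
      Real.sqrt (∑ i, (Delta (M i) (N i)) ^ 2) :=
  stmt_8_general D k M N hM hN
end

section
/- Let $\ket{\phi_1},\dots,\ket{\phi_m},\ket{\psi}$ be unit vectors in a finite-dimensional complex Hilbert space with $|\langle\psi|\phi_i\rangle| \le 1/(5m)$ for all $i$ and $|\langle\phi_i|\phi_j\rangle| \le 1/(5m)$ for all $i\ne j$. Let $\Pi$ be the orthogonal projection onto the span of $\phi_1,\dots,\phi_m$. Then $\langle\psi|\Pi|\psi\rangle \le 0.1$. -/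
/-!
Write `Πψ = ∑ cᵢ φᵢ`, `t = ‖Πψ‖² = Re ⟪Πψ, ψ⟫`, `s = ∑ ‖cᵢ‖`, `q = ∑ ‖cᵢ‖²` and `ε = 1/(5m)`.
The small overlaps with `ψ` give `t ≤ ε s`; expanding `‖∑ cᵢ φᵢ‖²` with off-diagonal Gram
entries at most `ε` gives `q ≤ t + ε s²`; Cauchy–Schwarz gives `s² ≤ m q`. Hence
`(1 - ε m) q ≤ t` and `t² ≤ ε² m q`, so `t ≤ ε² m / (1 - ε m) = 1 / (20 m)`.
-/

open Finset RCLike ComplexConjugate Submodule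

section NearlyOrthonormal

variable {𝕜 E ι : Type*} [RCLike 𝕜] [NormedAddCommGroup E] [InnerProductSpace 𝕜 E] [Fintype ι]

lemma norm_inner_sum_smul_le {ε : ℝ} {v : ι → E} {ψ : E} (hψ : ∀ i, ‖(inner 𝕜 ψ (v i) : 𝕜)‖ ≤ ε)
    (c : ι → 𝕜) : ‖(inner 𝕜 ψ (∑ i, c i • v i) : 𝕜)‖ ≤ ε * ∑ i, ‖c i‖ := by
  rw [inner_sum, mul_sum]
  refine (norm_sum_le _ _).trans (sum_le_sum fun i _ => ?_)
  rw [inner_smul_right, norm_mul, mul_comm ε]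
  exact mul_le_mul_of_nonneg_left (hψ i) (norm_nonneg _)

lemma norm_sq_sum_smul_eq_re_sum {v : ι → E} (c : ι → 𝕜) :
    ‖∑ i, c i • v i‖ ^ 2 = ∑ i, ∑ j, re (conj (c i) * c j * inner 𝕜 (v i) (v j)) := by
  rw [← inner_self_eq_norm_sq (𝕜 := 𝕜), sum_inner]
  simp only [inner_sum, inner_smul_left, inner_smul_right, map_sum]
  congr! 3 with i - j -
  ring

lemma sum_norm_sq_le_norm_sq_sum_smul_add {ε : ℝ} (hε : 0 ≤ ε) {v : ι → E}
    (hv : ∀ i, ‖v i‖ = 1) (hvv : ∀ i j, i ≠ j → ‖(inner 𝕜 (v i) (v j) : 𝕜)‖ ≤ ε) (c : ι → 𝕜) :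
    ∑ i, ‖c i‖ ^ 2 ≤ ‖∑ i, c i • v i‖ ^ 2 + ε * (∑ i, ‖c i‖) ^ 2 := by
  classical
  have term : ∀ i j, (if i = j then ‖c i‖ ^ 2 else 0) - ε * (‖c i‖ * ‖c j‖) ≤
      re (conj (c i) * c j * inner 𝕜 (v i) (v j)) := by
    intro i j
    obtain rfl | hij := eq_or_ne i j
    · have : inner 𝕜 (v i) (v i) = (1 : 𝕜) := by
        rw [inner_self_eq_norm_sq_to_K, hv i]; simp
      rw [this, mul_one, RCLike.conj_mul, if_pos rfl, ← ofReal_pow, ofReal_re]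
      nlinarith [sq_nonneg ‖c i‖]
    · have hre := neg_le_of_abs_le (abs_re_le_norm (conj (c i) * c j * inner 𝕜 (v i) (v j)))
      rw [norm_mul, norm_mul, norm_conj] at hre
      rw [if_neg hij, zero_sub]
      refine le_trans ?_ hre
      rw [neg_le_neg_iff, mul_comm ε]
      exact mul_le_mul_of_nonneg_left (hvv i j hij) (by positivity)
  have hsum := sum_le_sum fun i (_ : i ∈ univ) => sum_le_sum fun j (_ : j ∈ univ) => term i j
  simp only [sum_sub_distrib, sum_ite_eq, mem_univ, if_true] at hsum
  rw [norm_sq_sum_smul_eq_re_sum, sq, sum_mul_sum, mul_sum]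
  simp_rw [mul_sum]
  linarith

theorem norm_sq_starProjection_span_le {ε : ℝ} (hε : 0 ≤ ε) {v : ι → E} (hv : ∀ i, ‖v i‖ = 1)
    (hvv : ∀ i j, i ≠ j → ‖(inner 𝕜 (v i) (v j) : 𝕜)‖ ≤ ε) (hει : ε * Fintype.card ι < 1)
    [(span 𝕜 (Set.range v)).HasOrthogonalProjection] {ψ : E}
    (hψ : ∀ i, ‖(inner 𝕜 ψ (v i) : 𝕜)‖ ≤ ε) :
    ‖(span 𝕜 (Set.range v)).starProjection ψ‖ ^ 2 ≤
      ε ^ 2 * Fintype.card ι / (1 - ε * Fintype.card ι) := by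
  set K := span 𝕜 (Set.range v)
  set n : ℝ := (Fintype.card ι : ℝ)
  obtain ⟨c, hc⟩ := (mem_span_range_iff_exists_fun 𝕜).mp (K.starProjection_apply_mem ψ)
  set t := ‖K.starProjection ψ‖ ^ 2
  set s := ∑ i, ‖c i‖
  set q := ∑ i, ‖c i‖ ^ 2
  have ht : t ≤ ε * s :=
    calc t = re (inner 𝕜 (K.starProjection ψ) ψ) := (K.re_inner_starProjection_eq_normSq ψ).symm
      _ ≤ ‖(inner 𝕜 ψ (K.starProjection ψ) : 𝕜)‖ := norm_inner_symm (𝕜 := 𝕜) _ ψ ▸ re_le_norm _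
      _ ≤ ε * s := hc ▸ norm_inner_sum_smul_le hψ c
  have hq : q ≤ t + ε * s ^ 2 := by
    simpa only [hc] using sum_norm_sq_le_norm_sq_sum_smul_add hε hv hvv c
  have hs : s ^ 2 ≤ n * q := by simpa using sq_sum_le_card_mul_sum_sq (s := univ) (f := (‖c ·‖))
  have hqt : (1 - ε * n) * q ≤ t := by nlinarith
  have ht0 : 0 ≤ t := by positivity
  have htq : t ^ 2 ≤ ε ^ 2 * n * q := by nlinarith
  have hεn : 0 ≤ 1 - ε * n := by linarith
  rw [le_div_iff₀ (by linarith)]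
  obtain ht_zero | ht_pos := ht0.eq_or_lt
  · rw [← ht_zero, zero_mul]; positivity
  · refine le_of_mul_le_mul_left ?_ ht_pos
    nlinarith [mul_le_mul_of_nonneg_left htq hεn,
      mul_le_mul_of_nonneg_left hqt (by positivity : 0 ≤ ε ^ 2 * n)]

end NearlyOrthonormal

theorem stmt_10_general {E : Type*} [NormedAddCommGroup E] [InnerProductSpace ℂ E]
    [FiniteDimensional ℂ E] (m : ℕ)
    (φ : Fin m → E) (ψ : E)
    (hφ : ∀ i, ‖φ i‖ = 1)
    (hψφ : ∀ i, ‖(inner ℂ ψ (φ i) : ℂ)‖ ≤ 1 / (5 * m))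
    (hφφ : ∀ i j, i ≠ j → ‖(inner ℂ (φ i) (φ j) : ℂ)‖ ≤ 1 / (5 * m)) :
    ‖(Submodule.orthogonalProjectionOnto (Submodule.span ℂ (Set.range φ)) ψ : E)‖ ^ 2 ≤ 0.1 := by
  rw [← starProjection_apply]
  refine (norm_sq_starProjection_span_le (by positivity) hφ hφφ ?_ hψφ).trans ?_
  -- `m = 0` is covered too, since then `1 / (5 * m) = 0`
  all_goals
    rw [Fintype.card_fin]
    obtain rfl | hm := m.eq_zero_or_pos
    · norm_num
    · have : (1 : ℝ) ≤ m := Nat.one_le_cast.mpr hm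
      field_simp
      norm_num <;> linarith

theorem stmt_10 {E : Type*} [NormedAddCommGroup E] [InnerProductSpace ℂ E]
    [FiniteDimensional ℂ E] (m : ℕ) (hm : 1 ≤ m)
    (φ : Fin m → E) (ψ : E)
    (hφ : ∀ i, ‖φ i‖ = 1) (hψ : ‖ψ‖ = 1)
    (hψφ : ∀ i, ‖(inner ℂ ψ (φ i) : ℂ)‖ ≤ 1 / (5 * m))
    (hφφ : ∀ i j, i ≠ j → ‖(inner ℂ (φ i) (φ j) : ℂ)‖ ≤ 1 / (5 * m)) :
    ‖(Submodule.orthogonalProjectionOnto (Submodule.span ℂ (Set.range φ)) ψ : E)‖ ^ 2 ≤ 0.1 :=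
  stmt_10_general m φ ψ hφ hψφ hφφ
end

section
/- Let $L_1,\dots,L_k$ be non-negative integers summing to $L$, let $0<\delta<1$, and let $\xi_1,\dots,\xi_k \in [0,1]$. Suppose $p_1,\dots,p_k$ and $q_1,\dots,q_k$ are non-negative reals with $\sum_i \sqrt{p_i q_i}\,\xi_i \le 1-\delta^2$, and that for every $i$ in $\mathcal{I}=\{i : L_i \ge 0.1\delta^2 L/k\}$ we have $p_i, q_i \ge (1-0.1\delta^2) L_i/L$. Then $\prod_{i=1}^k \xi_i^{L_i} \le (1-0.6\delta^2)^L$. -/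
theorem stmt_11 (k L : ℕ) (hL : 0 < L) (Li : Fin k → ℕ) (hsum : ∑ i, Li i = L)
    (δ : ℝ) (hδ0 : 0 < δ) (hδ1 : δ < 1)
    (ξ p q : Fin k → ℝ)
    (hξ0 : ∀ i, 0 ≤ ξ i) (hξ1 : ∀ i, ξ i ≤ 1)
    (hp : ∀ i, 0 ≤ p i) (hq : ∀ i, 0 ≤ q i)
    (hover : ∑ i, Real.sqrt (p i * q i) * ξ i ≤ 1 - δ ^ 2)
    (hbig : ∀ i, 0.1 * δ ^ 2 * L / k ≤ (Li i : ℝ) →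
      (1 - 0.1 * δ ^ 2) * (Li i : ℝ) / L ≤ p i ∧
      (1 - 0.1 * δ ^ 2) * (Li i : ℝ) / L ≤ q i) :
    ∏ i, (ξ i) ^ (Li i) ≤ (1 - 0.6 * δ ^ 2) ^ L := by
  have hk : 0 < k := by
    rcases Nat.eq_zero_or_pos k with hk0 | hk0
    · subst hk0
      simp at hsum
      omega
    · exact hk0
  have hLpos : (0 : ℝ) < L := by exact_mod_cast hL
  have hkpos : (0 : ℝ) < k := by exact_mod_cast hk
  have hδ2 : δ ^ 2 < 1 := by nlinarith
  have hδ2' : 0 < δ ^ 2 := by positivity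
  set ε : ℝ := 0.1 * δ ^ 2 with hε
  have hε0 : 0 < ε := by positivity
  have hε1 : ε < 0.1 := by rw [hε]; nlinarith
  have h1ε : 0 < 1 - ε := by linarith
  -- modified xi
  set ζ : Fin k → ℝ := fun i => if ε * L / k ≤ (Li i : ℝ) then ξ i else 1 with hζ
  have hζ0 : ∀ i, 0 ≤ ζ i := by
    intro i; rw [hζ]; dsimp only; split <;> [exact hξ0 i; norm_num]
  have hξζ : ∀ i, ξ i ≤ ζ i := by
    intro i; rw [hζ]; dsimp only; split <;> [exact le_rfl; exact hξ1 i]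
  -- weights
  set w : Fin k → ℝ := fun i => (Li i : ℝ) / L with hw
  have hw0 : ∀ i, 0 ≤ w i := fun i => by positivity
  have hw1 : ∑ i, w i = 1 := by
    rw [hw]
    rw [← Finset.sum_div]
    rw [show ∑ i, ((Li i : ℝ)) = (L : ℝ) by exact_mod_cast congrArg Nat.cast hsum]
    field_simp
  set M : ℝ := (1 - δ ^ 2) / (1 - ε) + ε with hM
  -- arithmetic mean bound
  have hmean : ∑ i, w i * ζ i ≤ M := by
    classical
    rw [← Finset.sum_filter_add_sum_filter_not Finset.univ
      (fun i => ε * L / k ≤ (Li i : ℝ))]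
    have hbigpart :
        ∑ i ∈ Finset.univ.filter (fun i => ε * L / k ≤ (Li i : ℝ)), w i * ζ i
          ≤ (1 - δ ^ 2) / (1 - ε) := by
      rw [le_div_iff₀ h1ε]
      have hterm : ∀ i ∈ Finset.univ.filter (fun i => ε * L / k ≤ (Li i : ℝ)),
          w i * ζ i * (1 - ε) ≤ Real.sqrt (p i * q i) * ξ i := by
        intro i hi
        rw [Finset.mem_filter] at hi
        obtain ⟨hpB, hqB⟩ := hbig i hi.2
        have hb0 : 0 ≤ (1 - ε) * (Li i : ℝ) / L := by positivity
        have hsq : (1 - ε) * (Li i : ℝ) / L ≤ Real.sqrt (p i * q i) := by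
          rw [show ((1 - ε) * (Li i : ℝ) / L) = Real.sqrt (((1 - ε) * (Li i : ℝ) / L) ^ 2)
            from (Real.sqrt_sq hb0).symm]
          apply Real.sqrt_le_sqrt
          rw [sq]
          exact mul_le_mul hpB hqB hb0 (hp i)
        have hzeq : ζ i = ξ i := by rw [hζ]; dsimp only; rw [if_pos hi.2]
        rw [hzeq]
        have : w i * (1 - ε) = (1 - ε) * (Li i : ℝ) / L := by rw [hw]; ring
        calc w i * ξ i * (1 - ε) = ((1 - ε) * (Li i : ℝ) / L) * ξ i := by rw [hw]; ring
          _ ≤ Real.sqrt (p i * q i) * ξ i := by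
              apply mul_le_mul_of_nonneg_right hsq (hξ0 i)
      calc (∑ i ∈ Finset.univ.filter (fun i => ε * L / k ≤ (Li i : ℝ)), w i * ζ i) * (1 - ε)
          = ∑ i ∈ Finset.univ.filter (fun i => ε * L / k ≤ (Li i : ℝ)), w i * ζ i * (1 - ε) := by
            rw [Finset.sum_mul]
        _ ≤ ∑ i ∈ Finset.univ.filter (fun i => ε * L / k ≤ (Li i : ℝ)),
              Real.sqrt (p i * q i) * ξ i := Finset.sum_le_sum hterm
        _ ≤ ∑ i, Real.sqrt (p i * q i) * ξ i := by
            apply Finset.sum_le_sum_of_subset_of_nonneg (Finset.filter_subset _ _)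
            intro i _ _
            exact mul_nonneg (Real.sqrt_nonneg _) (hξ0 i)
        _ ≤ 1 - δ ^ 2 := hover
    have hsmallpart :
        ∑ i ∈ Finset.univ.filter (fun i => ¬ ε * L / k ≤ (Li i : ℝ)), w i * ζ i ≤ ε := by
      have hterm : ∀ i ∈ Finset.univ.filter (fun i => ¬ ε * L / k ≤ (Li i : ℝ)),
          w i * ζ i ≤ ε / k := by
        intro i hi
        rw [Finset.mem_filter] at hi
        have hlt : (Li i : ℝ) < ε * L / k := lt_of_not_ge hi.2
        have hζle : ζ i ≤ 1 := by
          rw [hζ]; dsimp only; split <;> [exact hξ1 i; exact le_rfl]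
        have hwle : w i ≤ ε / k := by
          rw [hw]
          rw [div_le_div_iff₀ hLpos hkpos]
          calc (Li i : ℝ) * k ≤ (ε * L / k) * k := by
                apply mul_le_mul_of_nonneg_right hlt.le hkpos.le
            _ = ε * L := by field_simp
        calc w i * ζ i ≤ w i * 1 := by
              apply mul_le_mul_of_nonneg_left hζle (hw0 i)
          _ = w i := mul_one _
          _ ≤ ε / k := hwle
      calc ∑ i ∈ Finset.univ.filter (fun i => ¬ ε * L / k ≤ (Li i : ℝ)), w i * ζ i
          ≤ ∑ _i ∈ Finset.univ.filter (fun i => ¬ ε * L / k ≤ (Li i : ℝ)), ε / k :=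
            Finset.sum_le_sum hterm
        _ = (Finset.univ.filter (fun i => ¬ ε * L / k ≤ (Li i : ℝ))).card * (ε / k) := by
            rw [Finset.sum_const, nsmul_eq_mul]
        _ ≤ k * (ε / k) := by
            apply mul_le_mul_of_nonneg_right _ (by positivity)
            have := Finset.card_filter_le Finset.univ (fun i => ¬ ε * L / k ≤ (Li i : ℝ))
            simp only [Finset.card_univ, Fintype.card_fin] at this
            exact_mod_cast this
        _ = ε := by field_simp
    rw [hM]
    linarith
  -- AM-GM
  have hprod0 : ∀ i, 0 ≤ ζ i ^ w i := fun i => Real.rpow_nonneg (hζ0 i) _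
  have hamgm : ∏ i, ζ i ^ w i ≤ M :=
    le_trans (Real.geom_mean_le_arith_mean_weighted Finset.univ w ζ
      (fun i _ => hw0 i) hw1 (fun i _ => hζ0 i)) hmean
  have hM0 : 0 ≤ M := le_trans (Finset.prod_nonneg fun i _ => hprod0 i) hamgm
  have hpowform : ∏ i, ζ i ^ (Li i) = (∏ i, ζ i ^ w i) ^ L := by
    rw [← Finset.prod_pow]
    apply Finset.prod_congr rfl
    intro i _
    rw [← Real.rpow_natCast (ζ i ^ w i) L, ← Real.rpow_mul (hζ0 i)]
    rw [show w i * (L : ℝ) = (Li i : ℝ) by rw [hw]; field_simp]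
    rw [Real.rpow_natCast]
  have hstep1 : ∏ i, (ξ i) ^ (Li i) ≤ ∏ i, ζ i ^ (Li i) := by
    apply Finset.prod_le_prod
    · intro i _; exact pow_nonneg (hξ0 i) _
    · intro i _; exact pow_le_pow_left₀ (hξ0 i) (hξζ i) _
  have hstep2 : (∏ i, ζ i ^ w i) ^ L ≤ M ^ L :=
    pow_le_pow_left₀ (Finset.prod_nonneg fun i _ => hprod0 i) hamgm _
  have hMle : M ≤ 1 - 0.6 * δ ^ 2 := by
    rw [hM, hε]
    rw [div_add' _ _ _ (ne_of_gt h1ε), div_le_iff₀ h1ε]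
    nlinarith
  calc ∏ i, (ξ i) ^ (Li i) ≤ (∏ i, ζ i ^ w i) ^ L := by rw [← hpowform]; exact hstep1
    _ ≤ M ^ L := hstep2
    _ ≤ (1 - 0.6 * δ ^ 2) ^ L := pow_le_pow_left₀ hM0 hMle _
end

section
/- Let $M=\{M_1,\dots,M_k\}$ be a measurement on $\mathbb{C}^D$ and suppose $N_1,\dots,N_k$ are matrices such that $\sum_{i=1}^k N_i^\dagger N_i \le I$, each $N_i$ is Hilbert-Schmidt orthogonal to $M_i - N_i$, and $\sum_{i=1}^k \|N_i\|_F^2 \ge D(1-\delta^2)$ for some $0<\delta<1$. Define $N_{k+1} = \sqrt{I - \sum_{i=1}^k N_i^\dagger N_i}$. Then $N = \{N_1,\dots,N_k,N_{k+1}\}$ is a measurement and $\Delta(M,N) \le \delta$, where $\Delta(M,N)^2 = \sum_i \Delta(M_i,N_i)^2 + \Delta(0, N_{k+1})^2$ with $\Delta(A,B)^2 \le \frac{1}{2D}\|A-B\|_F^2$. -/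
/-!
Orthogonality of `N i` and `M i - N i` gives Pythagoras, `‖M i - N i‖²_F = ‖M i‖²_F - ‖N i‖²_F`,
so by completeness of `M` the matched outcomes have total squared distance `D - S`, where
`S = ∑ ‖N i‖²_F`. The added outcome `√(1 - ∑ N iᴴ N i)` has squared norm `tr (1 - ∑ N iᴴ N i)`,
which is `D - S` as well. Evaluating each infimum `Δ` at the phase `θ = 0` then bounds `Δ(M, N)²`
by `2 (D - S) / (2 D) ≤ δ²`.
-/

open Matrix

open ComplexOrder in
noncomputable def Matrix.PosSemidef.sqrt {n 𝕜 : Type*} [Fintype n] [DecidableEq n] [RCLike 𝕜]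
    {A : Matrix n n 𝕜} (hA : A.PosSemidef) : Matrix n n 𝕜 :=
  hA.1.eigenvectorUnitary.1 * diagonal ((↑) ∘ (√·) ∘ hA.1.eigenvalues) *
  (star hA.1.eigenvectorUnitary : Matrix n n 𝕜)

namespace Matrix.PosSemidef

open ComplexOrder

variable {n 𝕜 : Type*} [Fintype n] [DecidableEq n] [RCLike 𝕜] {A : Matrix n n 𝕜}

lemma posSemidef_sqrt (hA : A.PosSemidef) : hA.sqrt.PosSemidef := by
  have hd : (diagonal ((↑) ∘ (√·) ∘ hA.1.eigenvalues : n → 𝕜)).PosSemidef :=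
    posSemidef_diagonal_iff.mpr fun i => by simp [RCLike.ofReal_nonneg]
  simpa [Matrix.PosSemidef.sqrt, Matrix.star_eq_conjTranspose] using
    hd.mul_mul_conjTranspose_same (hA.1.eigenvectorUnitary : Matrix n n 𝕜)

lemma sqrt_mul_self (hA : A.PosSemidef) : hA.sqrt * hA.sqrt = A := by
  set U : Matrix n n 𝕜 := (hA.1.eigenvectorUnitary : Matrix n n 𝕜)
  set S : Matrix n n 𝕜 := diagonal ((↑) ∘ (√·) ∘ hA.1.eigenvalues)
  have hU : star U * U = 1 := Unitary.coe_star_mul_self _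
  have hS : S * S = diagonal (RCLike.ofReal ∘ hA.1.eigenvalues) := by
    simp only [S, diagonal_mul_diagonal, Function.comp_apply, ← RCLike.ofReal_mul,
      Real.mul_self_sqrt (hA.eigenvalues_nonneg _)]
    rfl
  conv_rhs => rw [hA.1.spectral_theorem, Unitary.conjStarAlgAut_apply]
  calc hA.sqrt * hA.sqrt = U * S * (star U * U) * S * star U := by
        simp only [Matrix.PosSemidef.sqrt, U, S, Matrix.mul_assoc]
    _ = U * (S * S) * star U := by rw [hU, Matrix.mul_one, Matrix.mul_assoc U S S]
    _ = _ := by rw [hS]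

lemma conjTranspose_sqrt_mul_sqrt (hA : A.PosSemidef) : hA.sqrtᴴ * hA.sqrt = A := by
  rw [hA.posSemidef_sqrt.isHermitian.eq, hA.sqrt_mul_self]

end Matrix.PosSemidef

open ComplexOrder in
lemma Matrix.re_trace_conjTranspose_mul_self_nonneg {m n : Type*} [Fintype m] [Fintype n]
    (A : Matrix m n ℂ) : 0 ≤ (Aᴴ * A).trace.re :=
  (Complex.nonneg_iff.mp (posSemidef_conjTranspose_mul_self A).trace_nonneg).1

lemma Matrix.trace_conjTranspose_sub_mul_sub_of_orthogonal {m n R : Type*} [Fintype m]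
    [Fintype n] [CommRing R] [StarRing R] {M N : Matrix m n R}
    (h : (Nᴴ * (M - N)).trace = 0) :
    ((M - N)ᴴ * (M - N)).trace = (Mᴴ * M).trace - (Nᴴ * N).trace := by
  have h' : ((M - N)ᴴ * N).trace = 0 := by
    rw [← conjTranspose_conjTranspose ((M - N)ᴴ * N), conjTranspose_mul,
      conjTranspose_conjTranspose, trace_conjTranspose, h, star_zero]
  have hNM : (Nᴴ * M).trace = (Nᴴ * N).trace := by
    rwa [Matrix.mul_sub, trace_sub, sub_eq_zero] at h
  rw [Matrix.mul_sub, trace_sub, h', sub_zero, conjTranspose_sub, Matrix.sub_mul, trace_sub, hNM]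

lemma Delta_nonneg {n : Type*} [Fintype n] (A B : Matrix n n ℂ) : 0 ≤ Delta A B :=
  Real.sInf_nonneg <| by rintro x ⟨θ, -, rfl⟩; positivity

lemma Delta_sq_le {n : Type*} [Fintype n] (A B : Matrix n n ℂ) :
    Delta A B ^ 2 ≤ ((A - B)ᴴ * (A - B)).trace.re / (2 * Fintype.card n) := by
  have hle : Delta A B ≤ (1 / √(2 * Fintype.card n)) * √(((A - B)ᴴ * (A - B)).trace.re) := by
    refine csInf_le ⟨0, by rintro x ⟨θ, -, rfl⟩; positivity⟩ ⟨0, ⟨le_rfl, by positivity⟩, ?_⟩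
    simp
  calc Delta A B ^ 2
      ≤ ((1 / √(2 * Fintype.card n)) * √(((A - B)ᴴ * (A - B)).trace.re)) ^ 2 :=
        pow_le_pow_left₀ (Delta_nonneg A B) hle 2
    _ = ((A - B)ᴴ * (A - B)).trace.re / (2 * Fintype.card n) := by
        rw [mul_pow, div_pow, one_pow, Real.sq_sqrt (by positivity),
          Real.sq_sqrt (re_trace_conjTranspose_mul_self_nonneg _), one_div_mul_eq_div]

open ComplexOrder in
theorem stmt_15_general (D k : ℕ) (δ : ℝ) (hδ0 : 0 < δ)
    (M N : Fin k → Matrix (Fin D) (Fin D) ℂ)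
    (hM : ∑ i, (M i)ᴴ * M i = 1)
    (hpsd : ((1 : Matrix (Fin D) (Fin D) ℂ) - ∑ i, (N i)ᴴ * N i).PosSemidef)
    (horth : ∀ i, ((N i)ᴴ * (M i - N i)).trace = 0)
    (hnorm : (D : ℝ) * (1 - δ ^ 2) ≤ ∑ i, ((N i)ᴴ * N i).trace.re) :
    (hpsd.sqrtᴴ * hpsd.sqrt + ∑ i, (N i)ᴴ * N i = 1) ∧
    Real.sqrt (∑ i, (Delta (M i) (N i)) ^ 2 + (Delta 0 hpsd.sqrt) ^ 2) ≤ δ := by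
  have hsqrt := hpsd.conjTranspose_sqrt_mul_sqrt
  refine ⟨by rw [hsqrt, sub_add_cancel], ?_⟩
  set S := ∑ i, ((N i)ᴴ * N i).trace.re
  have hmatched : ∑ i, ((M i - N i)ᴴ * (M i - N i)).trace.re = D - S := by
    simp only [trace_conjTranspose_sub_mul_sub_of_orthogonal (horth _), Complex.sub_re,
      Finset.sum_sub_distrib, S, ← Complex.re_sum, ← trace_sum, hM, trace_one]
    simp
  have hextra : ((0 - hpsd.sqrt)ᴴ * (0 - hpsd.sqrt)).trace.re = D - S := by
    rw [zero_sub, conjTranspose_neg, neg_mul_neg, hsqrt, trace_sub, trace_one, trace_sum]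
    simp [S]
  have hΔ : ∑ i, Delta (M i) (N i) ^ 2 + Delta 0 hpsd.sqrt ^ 2 ≤ (D - S) / D := by
    calc _ ≤ ∑ i, ((M i - N i)ᴴ * (M i - N i)).trace.re / (2 * D)
          + ((0 - hpsd.sqrt)ᴴ * (0 - hpsd.sqrt)).trace.re / (2 * D) := by
          gcongr with i
          · simpa using Delta_sq_le (M i) (N i)
          · simpa using Delta_sq_le 0 hpsd.sqrt
      _ = (D - S) / D := by rw [← Finset.sum_div, hmatched, hextra]; ring
  have hdefect : (D - S) / D ≤ δ ^ 2 := by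
    rcases D.eq_zero_or_pos with rfl | hD
    · simp only [CharP.cast_eq_zero, div_zero]; positivity
    · rw [div_le_iff₀ (by exact_mod_cast hD)]; linarith
  exact (Real.sqrt_le_left hδ0.le).mpr (hΔ.trans hdefect)

open ComplexOrder in
theorem stmt_15 (D k : ℕ) (hD : 0 < D) (δ : ℝ) (hδ0 : 0 < δ) (hδ1 : δ < 1)
    (M N : Fin k → Matrix (Fin D) (Fin D) ℂ)
    (hM : ∑ i, (M i)ᴴ * M i = 1)
    (hpsd : ((1 : Matrix (Fin D) (Fin D) ℂ) - ∑ i, (N i)ᴴ * N i).PosSemidef)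
    (horth : ∀ i, ((N i)ᴴ * (M i - N i)).trace = 0)
    (hnorm : (D : ℝ) * (1 - δ ^ 2) ≤ ∑ i, ((N i)ᴴ * N i).trace.re) :
    (hpsd.sqrtᴴ * hpsd.sqrt + ∑ i, (N i)ᴴ * N i = 1) ∧
    Real.sqrt (∑ i, (Delta (M i) (N i)) ^ 2 + (Delta 0 hpsd.sqrt) ^ 2) ≤ δ :=
  stmt_15_general D k δ hδ0 M N hM hpsd horth hnorm
end
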